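/- Let d, p, q, a, b be positive integers such that d is not a perfect square, (p, q) solves the Pell equation (i.e. q² − d·p² = 1), b ≥ 2, a² ≥ d·b·(b−1), and a·q < p·d·b (i.e. a/b < (p/q)·d). Then b < q². -/
import Mathlib


theorem stmt_0 (d p q a b : ℕ) (hd : 0 < d) (hp : 0 < p) (hq : 0 < q)
    (ha : 0 < a) (hb : 2 ≤ b) (hnsq : ¬ IsSquare d)
    (hpell : q ^ 2 = d * p ^ 2 + 1)
    (harea : d * b * (b - 1) ≤ a ^ 2)
    (hlt : a * q < p * d * b) :
    b < q ^ 2 := by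
  obtain ⟨c, rfl⟩ : ∃ c, b = c + 2 := ⟨b - 2, by omega⟩
  simp only [show c + 2 - 1 = c + 1 from rfl] at harea
  have h1 : (a * q) ^ 2 < (p * d * (c + 2)) ^ 2 :=
    Nat.pow_lt_pow_left hlt (by norm_num)
  have h2 : d * (c + 2) * (c + 1) * q ^ 2 ≤ a ^ 2 * q ^ 2 :=
    Nat.mul_le_mul_right _ harea
  have h3 : d * (c + 2) * (c + 1) * (d * p ^ 2 + 1) < (p * d) ^ 2 * (c + 2) ^ 2 := by
    rw [mul_pow] at h1; have := lt_of_le_of_lt h2 h1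
    rw [hpell] at this; exact this.trans_eq (by ring)
  have h4 : d * (c + 2) * ((c + 1) * (d * p ^ 2 + 1)) <
      d * (c + 2) * ((c + 2) * (d * p ^ 2)) := by
    calc d * (c + 2) * ((c + 1) * (d * p ^ 2 + 1))
        = d * (c + 2) * (c + 1) * (d * p ^ 2 + 1) := by ring
      _ < (p * d) ^ 2 * (c + 2) ^ 2 := h3
      _ = d * (c + 2) * ((c + 2) * (d * p ^ 2)) := by ring
  have h5 : (c + 1) * (d * p ^ 2 + 1) < (c + 2) * (d * p ^ 2) :=
    Nat.lt_of_mul_lt_mul_left h4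
  have h6 : c + 1 < d * p ^ 2 := by nlinarith [h5]
  rw [hpell]
  linarith
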